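/- Every coset of Γ_q(k) in k[x_0,...,x_m] contains a unique projectively reduced polynomial; i.e., for every f there is a unique projectively reduced g with f - g ∈ Γ_q(k), namely g = f̄. -/

import Mathlib

/-!
Existence: for `i < j` the Fermat relation `x_i ^ q * x_j ≡ x_i * x_j ^ q` lets `x_i` shed `q - 1`
from its exponent onto `x_j` as long as `x_j` occurs. Shedding all excess of the variables below
the top variable of a monomial onto the top variable yields its projective reduction, so every
monomial is congruent to its reduction modulo `Γ_q`.

Uniqueness: a reduced `h ∈ Γ_q` vanishes. `Γ_q` is a homogeneous ideal vanishing at all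
`F_q`-points, so every homogeneous component of `h` lies in it and vanishes there too. On reduced
monomials of a fixed degree, reducing every exponent modulo `q - 1` is injective and does not
change values at `F_q`-points; it turns the component into a polynomial of degree `< q` in
each variable vanishing on `F_q ^ (m + 1)`, which is zero by the combinatorial Nullstellensatz.
-/

open MvPolynomial Finset

/-- Reduce an exponent modulo `q-1`: unchanged if `≤ q-1`, otherwise the
representative in `{1,...,q-1}` congruent to it modulo `q-1`. -/
def redExp (q a : ℕ) : ℕ := if a ≤ q - 1 then a else (a - 1) % (q - 1) + 1

/-- Projective reduction of a monomial (given by its exponent vector): all exponents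
below the top variable of the support are reduced modulo `q-1`, and the difference is
transferred to the exponent of the top variable. -/
noncomputable def projRed (q : ℕ) {m : ℕ} (μ : Fin (m + 1) →₀ ℕ) : Fin (m + 1) →₀ ℕ :=
  if h : μ.support.Nonempty then
    letI ℓ := μ.support.max' h
    Finsupp.equivFunOnFinite.symm fun i =>
      if i < ℓ then redExp q (μ i)
      else if i = ℓ then μ ℓ + ∑ j ∈ Finset.univ.filter (· < ℓ), (μ j - redExp q (μ j))
      else 0
  else 0

/-- Projective reduction of a polynomial: the linear extension of projective
reduction of monomials. -/
noncomputable def polyRed (q : ℕ) {m : ℕ} {k : Type} [CommRing k]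
    (f : MvPolynomial (Fin (m + 1)) k) : MvPolynomial (Fin (m + 1)) k :=
  f.support.sum fun μ => monomial (projRed q μ) (coeff μ f)

/-- The ideal generated by the Fermat polynomials `X i ^ q * X j - X i * X j ^ q`. -/
noncomputable def fermatIdeal (q m : ℕ) (k : Type) [CommRing k] : Ideal (MvPolynomial (Fin (m + 1)) k) :=
  Ideal.span {f | ∃ i j : Fin (m + 1), i < j ∧ f = X i ^ q * X j - X i * X j ^ q}

/-- The leading exponent (exponent vector of the leading monomial) of a multivariate
polynomial with respect to a monomial order. -/
noncomputable def lmExp {σ : Type} (mo : MonomialOrder σ) {R : Type} [CommSemiring R]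
    (f : MvPolynomial σ R) : σ →₀ ℕ :=
  mo.toSyn.symm (f.support.sup fun μ => mo.toSyn μ)

section RedExp

lemma redExp_zero (q : ℕ) : redExp q 0 = 0 := by simp [redExp]

lemma redExp_le_self (q a : ℕ) : redExp q a ≤ a := by
  rw [redExp]; split_ifs
  · exact le_rfl
  · have := Nat.mod_le (a - 1) (q - 1); omega

lemma redExp_eq_zero_iff (q a : ℕ) : redExp q a = 0 ↔ a = 0 := by
  rw [redExp]; split_ifs <;> simp; omega

lemma redExp_le (q : ℕ) (hq : 2 ≤ q) (a : ℕ) : redExp q a ≤ q - 1 := by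
  rw [redExp]; split_ifs with h
  · exact h
  · have : (a - 1) % (q - 1) < q - 1 := Nat.mod_lt _ (by omega)
    omega

lemma redExp_idem (q : ℕ) (hq : 2 ≤ q) (a : ℕ) : redExp q (redExp q a) = redExp q a := by
  rw [redExp, if_pos (redExp_le q hq a)]

lemma redExp_add_self (q : ℕ) (hq : 2 ≤ q) (a : ℕ) : redExp q (a + q) = redExp q (a + 1) := by
  have he : a + q - 1 = a + (q - 1) := by omega
  rw [redExp, redExp, if_neg (by omega), he, Nat.add_mod_right]
  split_ifs with h
  · rw [Nat.mod_eq_of_lt (by omega)]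
  · simp

end RedExp

section CommMonoid

variable {M : Type*} [CommMonoid M] {q : ℕ}

lemma pow_mul_eq_pow_redExp_mul_pow (hq : 2 ≤ q) {x y : M} (hxy : x ^ q * y = x * y ^ q)
    (a : ℕ) : x ^ a * y = x ^ redExp q a * y ^ (1 + (a - redExp q a)) := by
  induction a using Nat.strong_induction_on with
  | _ a ih =>
    by_cases ha : a ≤ q - 1
    · rw [redExp, if_pos ha, Nat.sub_self, add_zero, pow_one]
    obtain ⟨b, rfl⟩ : ∃ b, a = b + q := ⟨a - q, by omega⟩
    have hle := redExp_le_self q (b + 1)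
    calc x ^ (b + q) * y = x ^ b * (x ^ q * y) := by rw [pow_add, mul_assoc]
      _ = x ^ (b + 1) * y * y ^ (q - 1) := by
        have hyq : y ^ q = y * y ^ (q - 1) := by rw [← pow_succ', Nat.sub_add_cancel (by omega)]
        rw [hxy, hyq, pow_succ]
        ac_rfl
      _ = x ^ redExp q (b + 1) * y ^ (1 + (b + 1 - redExp q (b + 1))) * y ^ (q - 1) := by
        rw [ih (b + 1) (by omega)]
      _ = x ^ redExp q (b + q) * y ^ (1 + (b + q - redExp q (b + q))) := by
        rw [redExp_add_self q hq, mul_assoc, ← pow_add]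
        congr 2; omega

lemma pow_redExp (hq : 2 ≤ q) {x : M} (hx : x ^ q = x) (a : ℕ) : x ^ redExp q a = x ^ a := by
  simpa using (pow_mul_eq_pow_redExp_mul_pow hq (x := x) (y := 1) (by simpa using hx) a).symm

lemma prod_pow_mul_eq_prod_pow_redExp_mul_pow {ι : Type*} [DecidableEq ι] (hq : 2 ≤ q)
    (s : Finset ι) (x : ι → M) (y : M) (hxy : ∀ i ∈ s, x i ^ q * y = x i * y ^ q) (a : ι → ℕ) :
    (∏ i ∈ s, x i ^ a i) * y =
      (∏ i ∈ s, x i ^ redExp q (a i)) * y ^ (1 + ∑ i ∈ s, (a i - redExp q (a i))) := by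
  induction s using Finset.induction_on with
  | empty => simp
  | insert i s hi ih =>
    rw [prod_insert hi, prod_insert hi, sum_insert hi, mul_assoc,
      ih fun j hj => hxy j (mem_insert_of_mem hj)]
    calc x i ^ a i * ((∏ j ∈ s, x j ^ redExp q (a j)) *
          y ^ (1 + ∑ j ∈ s, (a j - redExp q (a j))))
        = (∏ j ∈ s, x j ^ redExp q (a j)) * y ^ (∑ j ∈ s, (a j - redExp q (a j))) *
          (x i ^ a i * y) := by rw [pow_add, pow_one]; ac_rfl
      _ = _ := by
        rw [pow_mul_eq_pow_redExp_mul_pow hq (hxy i (mem_insert_self i s))]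
        simp only [pow_add, pow_one]
        ac_rfl

lemma prod_pow_eq_prod_filter_lt_mul_pow {ι : Type*} [Fintype ι] [LinearOrder ι] (x : ι → M)
    (ν : ι → ℕ) {ℓ : ι} (hν : ∀ i, ℓ < i → ν i = 0) :
    ∏ i, x i ^ ν i = (∏ i ∈ univ.filter (· < ℓ), x i ^ ν i) * x ℓ ^ ν ℓ := by
  rw [← prod_filter_mul_prod_filter_not univ (· < ℓ)]
  congr 1
  refine prod_eq_single_of_mem _ (by simp) fun i hi hne => ?_
  rw [hν i (lt_of_le_of_ne (by simpa using hi) (Ne.symm hne)), pow_zero]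

end CommMonoid

lemma Finsupp.apply_eq_zero_of_max'_lt {ι M : Type*} [LinearOrder ι] [Zero M] {μ : ι →₀ M}
    (h : μ.support.Nonempty) {i : ι} (hi : μ.support.max' h < i) : μ i = 0 :=
  Finsupp.notMem_support_iff.mp fun hmem => (μ.support.le_max' i hmem).not_gt hi

section ProjRed

variable {q m : ℕ} {μ : Fin (m + 1) →₀ ℕ}

lemma projRed_zero (q m : ℕ) : projRed q (0 : Fin (m + 1) →₀ ℕ) = 0 := by
  rw [projRed, dif_neg (by simp)]

lemma projRed_apply (h : μ.support.Nonempty) (i : Fin (m + 1)) :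
    projRed q μ i =
      if i < μ.support.max' h then redExp q (μ i)
      else if i = μ.support.max' h then
        μ (μ.support.max' h) +
          ∑ j ∈ univ.filter (· < μ.support.max' h), (μ j - redExp q (μ j))
      else 0 := by
  rw [projRed, dif_pos h]
  rfl

lemma projRed_apply_lt (h : μ.support.Nonempty) {i : Fin (m + 1)}
    (hi : i < μ.support.max' h) : projRed q μ i = redExp q (μ i) := by
  rw [projRed_apply h, if_pos hi]

lemma projRed_apply_gt (h : μ.support.Nonempty) {i : Fin (m + 1)}
    (hi : μ.support.max' h < i) : projRed q μ i = 0 := by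
  rw [projRed_apply h, if_neg (by omega), if_neg (by omega)]

lemma projRed_apply_max' (h : μ.support.Nonempty) :
    projRed q μ (μ.support.max' h) =
      μ (μ.support.max' h) + ∑ j ∈ univ.filter (· < μ.support.max' h), (μ j - redExp q (μ j)) := by
  rw [projRed_apply h, if_neg (lt_irrefl _), if_pos rfl]

lemma max'_mem_support_projRed (h : μ.support.Nonempty) :
    μ.support.max' h ∈ (projRed q μ).support := by
  have : μ (μ.support.max' h) ≠ 0 := Finsupp.mem_support_iff.mp (max'_mem _ h)
  rw [Finsupp.mem_support_iff, projRed_apply_max' h]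
  omega

lemma max'_support_projRed (h : μ.support.Nonempty) :
    (projRed q μ).support.max' ⟨_, max'_mem_support_projRed h⟩ = μ.support.max' h :=
  le_antisymm
    (max'_le _ _ _ fun _ hi => not_lt.mp fun hlt =>
      Finsupp.mem_support_iff.mp hi (projRed_apply_gt h hlt))
    (le_max' _ _ (max'_mem_support_projRed h))

lemma projRed_projRed (hq : 2 ≤ q) (μ : Fin (m + 1) →₀ ℕ) :
    projRed q (projRed q μ) = projRed q μ := by
  rcases μ.support.eq_empty_or_nonempty with h | h
  · rw [Finsupp.support_eq_empty.mp h, projRed_zero, projRed_zero]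
  have h' : (projRed q μ).support.Nonempty := ⟨_, max'_mem_support_projRed h⟩
  ext i
  rw [projRed_apply h' i, max'_support_projRed h]
  rcases lt_trichotomy i (μ.support.max' h) with hi | rfl | hi
  · rw [if_pos hi, projRed_apply_lt h hi, redExp_idem q hq]
  · rw [if_neg (lt_irrefl _), if_pos rfl, sum_eq_zero, add_zero]
    intro j hj
    rw [projRed_apply_lt h (mem_filter.mp hj).2, redExp_idem q hq, Nat.sub_self]
  · rw [if_neg (by omega), if_neg (by omega), projRed_apply_gt h hi]

end ProjRed

section MapExponents

variable {σ R : Type*} [CommSemiring R]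

noncomputable def MvPolynomial.mapExponents (g : (σ →₀ ℕ) → σ →₀ ℕ) :
    MvPolynomial σ R →ₗ[R] MvPolynomial σ R :=
  AddMonoidAlgebra.mapDomainLinearMap R R g

namespace MvPolynomial

lemma mapExponents_monomial (g : (σ →₀ ℕ) → σ →₀ ℕ) (μ : σ →₀ ℕ) (c : R) :
    mapExponents g (monomial μ c) = monomial (g μ) c := by
  simp [mapExponents, ← single_eq_monomial]

lemma mapExponents_eq_sum (g : (σ →₀ ℕ) → σ →₀ ℕ) (p : MvPolynomial σ R) :
    mapExponents g p = ∑ μ ∈ p.support, monomial (g μ) (coeff μ p) := by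
  conv_lhs => rw [p.as_sum]
  simp only [map_sum, mapExponents_monomial]

lemma mapExponents_mapExponents (g g' : (σ →₀ ℕ) → σ →₀ ℕ) (p : MvPolynomial σ R) :
    mapExponents g (mapExponents g' p) = mapExponents (g ∘ g') p := by
  simp [mapExponents]

lemma support_mapExponents_subset [DecidableEq σ] (g : (σ →₀ ℕ) → σ →₀ ℕ)
    (p : MvPolynomial σ R) : (mapExponents g p).support ⊆ p.support.image g :=
  Finsupp.mapDomain_support

lemma coeff_mapExponents_of_injOn {g : (σ →₀ ℕ) → σ →₀ ℕ} {p : MvPolynomial σ R}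
    (hg : Set.InjOn g p.support) {μ : σ →₀ ℕ} (hμ : μ ∈ p.support) :
    coeff (g μ) (mapExponents g p) = coeff μ p :=
  Finsupp.mapDomain_apply' _ _ subset_rfl hg hμ

lemma eval_mapExponents {S : Type*} [CommSemiring S] (f : R →+* S) (x : σ → S)
    {g : (σ →₀ ℕ) → σ →₀ ℕ} (hg : ∀ μ, (g μ).prod (fun i e => x i ^ e) = μ.prod fun i e => x i ^ e)
    (p : MvPolynomial σ R) : eval₂ f x (mapExponents g p) = eval₂ f x p := by
  induction p using induction_on' with
  | monomial μ c => rw [mapExponents_monomial, eval₂_monomial, eval₂_monomial, hg]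
  | add p p' hp hp' => rw [map_add, eval₂_add, eval₂_add, hp, hp']

lemma sub_mapExponents_mem {S : Type*} [CommRing S] {g : (σ →₀ ℕ) → σ →₀ ℕ}
    {I : Ideal (MvPolynomial σ S)} (hg : ∀ μ, monomial μ (1 : S) - monomial (g μ) 1 ∈ I)
    (p : MvPolynomial σ S) : p - mapExponents g p ∈ I := by
  induction p using induction_on' with
  | monomial μ c =>
    rw [mapExponents_monomial, ← mul_one c, ← smul_eq_mul, ← smul_monomial, ← smul_monomial,
      ← smul_sub]
    exact I.smul_of_tower_mem c (hg μ)
  | add p p' hp hp' =>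
    rw [map_add, add_sub_add_comm]
    exact I.add_mem hp hp'

end MvPolynomial

end MapExponents

section PolyRed

variable {q m : ℕ} {k : Type} [CommRing k]

lemma polyRed_eq_mapExponents (f : MvPolynomial (Fin (m + 1)) k) :
    polyRed q f = mapExponents (projRed q) f :=
  (mapExponents_eq_sum _ f).symm

lemma polyRed_sub (f g : MvPolynomial (Fin (m + 1)) k) :
    polyRed q (f - g) = polyRed q f - polyRed q g := by
  simp only [polyRed_eq_mapExponents, map_sub]

lemma polyRed_polyRed (hq : 2 ≤ q) (f : MvPolynomial (Fin (m + 1)) k) :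
    polyRed q (polyRed q f) = polyRed q f := by
  simp only [polyRed_eq_mapExponents, mapExponents_mapExponents]
  congr 2
  exact funext (projRed_projRed hq)

lemma projRed_eq_self_of_mem_support (hq : 2 ≤ q) {f : MvPolynomial (Fin (m + 1)) k}
    (hf : polyRed q f = f) {μ : Fin (m + 1) →₀ ℕ} (hμ : μ ∈ f.support) : projRed q μ = μ := by
  classical
  rw [← hf, polyRed_eq_mapExponents] at hμ
  obtain ⟨ν, -, rfl⟩ := mem_image.mp (support_mapExponents_subset _ _ hμ)
  exact projRed_projRed hq ν

end PolyRed

section Existence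

variable {q m : ℕ} {k : Type} [CommRing k]

lemma prod_pow_projRed_eq_prod_pow {M : Type*} [CommMonoid M] (hq : 2 ≤ q) {x : Fin (m + 1) → M}
    (hx : ∀ i j, i < j → x i ^ q * x j = x i * x j ^ q) (μ : Fin (m + 1) →₀ ℕ) :
    ∏ i, x i ^ projRed q μ i = ∏ i, x i ^ μ i := by
  rcases μ.support.eq_empty_or_nonempty with h | h
  · rw [Finsupp.support_eq_empty.mp h, projRed_zero]
  have hpos : μ (μ.support.max' h) ≠ 0 := Finsupp.mem_support_iff.mp (max'_mem _ h)
  obtain ⟨n, hn⟩ := Nat.exists_eq_add_one.mpr (Nat.pos_of_ne_zero hpos)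
  have shed := prod_pow_mul_eq_prod_pow_redExp_mul_pow hq (univ.filter (· < μ.support.max' h)) x
    (x (μ.support.max' h)) (fun i hi => hx i _ (mem_filter.mp hi).2) μ
  rw [prod_pow_eq_prod_filter_lt_mul_pow x _ fun i => projRed_apply_gt h,
    prod_pow_eq_prod_filter_lt_mul_pow x _ fun i => Finsupp.apply_eq_zero_of_max'_lt h,
    prod_congr rfl fun i hi => by rw [projRed_apply_lt h (mem_filter.mp hi).2],
    projRed_apply_max' h, hn, pow_succ', ← mul_assoc, shed]
  simp only [pow_add, pow_one]
  ac_rfl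

lemma monomial_sub_monomial_projRed_mem_fermatIdeal (hq : 2 ≤ q) (μ : Fin (m + 1) →₀ ℕ) :
    monomial μ (1 : k) - monomial (projRed q μ) 1 ∈ fermatIdeal q m k := by
  have hx : ∀ i j : Fin (m + 1), i < j →
      Ideal.Quotient.mk (fermatIdeal q m k) (X i ^ q * X j) =
        Ideal.Quotient.mk (fermatIdeal q m k) (X i * X j ^ q) :=
    fun i j hij => Ideal.Quotient.eq.mpr (Ideal.subset_span ⟨i, j, hij, rfl⟩)
  simp only [map_mul, map_pow] at hx
  rw [← Ideal.Quotient.eq, monomial_eq, monomial_eq, Finsupp.prod_fintype _ _ fun _ => pow_zero _,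
    Finsupp.prod_fintype _ _ fun _ => pow_zero _]
  simp only [map_mul, map_prod, map_pow]
  rw [prod_pow_projRed_eq_prod_pow hq hx]

lemma sub_polyRed_mem_fermatIdeal (hq : 2 ≤ q) (f : MvPolynomial (Fin (m + 1)) k) :
    f - polyRed q f ∈ fermatIdeal q m k := by
  rw [polyRed_eq_mapExponents]
  exact sub_mapExponents_mem (monomial_sub_monomial_projRed_mem_fermatIdeal hq) f

end Existence

section AffRed

noncomputable def affRed (q : ℕ) {σ : Type*} (μ : σ →₀ ℕ) : σ →₀ ℕ :=
  μ.mapRange (redExp q) (redExp_zero q)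

lemma affRed_apply (q : ℕ) {σ : Type*} (μ : σ →₀ ℕ) (i : σ) : affRed q μ i = redExp q (μ i) :=
  Finsupp.mapRange_apply

lemma support_affRed (q : ℕ) {σ : Type*} (μ : σ →₀ ℕ) : (affRed q μ).support = μ.support := by
  ext i
  simp only [Finsupp.mem_support_iff, affRed_apply, ne_eq, redExp_eq_zero_iff]

lemma Finsupp.eq_of_degree_eq_of_forall_ne {ι : Type*} [Fintype ι] [DecidableEq ι]
    {μ ν : ι →₀ ℕ} (ℓ : ι) (hne : ∀ i, i ≠ ℓ → μ i = ν i) (hdeg : μ.degree = ν.degree) :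
    μ = ν := by
  rw [Finsupp.degree_eq_sum, Finsupp.degree_eq_sum, ← Finset.add_sum_erase _ (⇑μ) (mem_univ ℓ),
    ← Finset.add_sum_erase _ (⇑ν) (mem_univ ℓ),
    Finset.sum_congr rfl fun i hi => hne i (ne_of_mem_erase hi)] at hdeg
  ext i
  by_cases hi : i = ℓ
  · subst hi; exact Nat.add_right_cancel hdeg
  · exact hne i hi

variable {q m : ℕ}

lemma apply_eq_affRed_apply_of_projRed_eq {μ : Fin (m + 1) →₀ ℕ} (hμ : projRed q μ = μ)
    (h : μ.support.Nonempty) {i : Fin (m + 1)} (hi : i ≠ μ.support.max' h) :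
    μ i = affRed q μ i := by
  rw [affRed_apply]
  rcases lt_or_gt_of_ne hi with hlt | hgt
  · conv_lhs => rw [← hμ]
    exact projRed_apply_lt h hlt
  · rw [Finsupp.apply_eq_zero_of_max'_lt h hgt, redExp_zero]

/-- Off its top variable a reduced exponent equals its `affRed`, and the degree fixes the top
exponent. -/
lemma affRed_injOn (q : ℕ) (d : ℕ) :
    Set.InjOn (affRed q) {μ : Fin (m + 1) →₀ ℕ | projRed q μ = μ ∧ μ.degree = d} := by
  rintro μ ⟨hμ, hμd⟩ ν ⟨hν, hνd⟩ hμν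
  have hsupp : μ.support = ν.support := by rw [← support_affRed q μ, hμν, support_affRed]
  rcases μ.support.eq_empty_or_nonempty with h | h
  · rw [Finsupp.support_eq_empty.mp h, Finsupp.support_eq_empty.mp (hsupp.symm.trans h)]
  have hν' : ν.support.Nonempty := hsupp ▸ h
  have htop : ν.support.max' hν' = μ.support.max' h := by simp only [hsupp]
  refine Finsupp.eq_of_degree_eq_of_forall_ne (μ.support.max' h) (fun i hi => ?_)
    (hμd.trans hνd.symm)
  rw [apply_eq_affRed_apply_of_projRed_eq hμ h hi, hμν,
    ← apply_eq_affRed_apply_of_projRed_eq hν hν' (htop ▸ hi)]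


lemma degreeOf_mapExponents_affRed_le {σ R : Type*} [CommSemiring R] (hq : 2 ≤ q)
    (p : MvPolynomial σ R) (i : σ) : degreeOf i (mapExponents (affRed q) p) ≤ q - 1 := by
  classical
  refine degreeOf_le_iff.mpr fun ν hν => ?_
  obtain ⟨μ, -, rfl⟩ := mem_image.mp (support_mapExponents_subset _ _ hν)
  rw [affRed_apply]
  exact redExp_le q hq _

lemma eval_mapExponents_affRed {σ R : Type*} [CommSemiring R] (hq : 2 ≤ q) {x : σ → R}
    (hx : ∀ i, x i ^ q = x i) (p : MvPolynomial σ R) :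
    eval x (mapExponents (affRed q) p) = eval x p :=
  eval_mapExponents _ x (fun μ => by
    rw [affRed, Finsupp.prod_mapRange_index fun _ => pow_zero _]
    exact Finsupp.prod_congr fun i _ => pow_redExp hq (hx i) _) p

lemma eq_zero_of_degreeOf_lt_card_of_eval_eq_zero {F R σ : Type*} [Field F] [Fintype F]
    [CommRing R] [IsDomain R] [Algebra F R] [Finite σ] (P : MvPolynomial σ R)
    (hdeg : ∀ i, degreeOf i P < Fintype.card F)
    (heval : ∀ a : σ → F, eval (algebraMap F R ∘ a) P = 0) : P = 0 := by
  refine eq_zero_of_eval_zero_at_prod_finset P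
    (fun _ => univ.map ⟨algebraMap F R, (algebraMap F R).injective⟩) (by simpa using hdeg)
    fun x hx => ?_
  choose a _ ha using fun i => mem_map.mp (hx i)
  rw [show x = algebraMap F R ∘ a from _root_.funext fun i => (ha i).symm]
  exact heval a

end AffRed

section Uniqueness

variable {q m : ℕ}

lemma fermatIdeal_le_ker_eval {k : Type} [CommRing k] {x : Fin (m + 1) → k}
    (hx : ∀ i, x i ^ q = x i) : fermatIdeal q m k ≤ RingHom.ker (eval x) := by
  rw [fermatIdeal, Ideal.span_le]
  rintro _ ⟨i, j, -, rfl⟩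
  simp [hx]

attribute [local instance] MvPolynomial.gradedAlgebra in
lemma fermatIdeal_isHomogeneous {k : Type} [CommRing k] :
    (fermatIdeal q m k).IsHomogeneous (homogeneousSubmodule (Fin (m + 1)) k) := by
  refine Ideal.homogeneous_span _ _ ?_
  rintro _ ⟨i, j, -, rfl⟩
  have h₁ := (isHomogeneous_X_pow i q).mul (isHomogeneous_X k j)
  have h₂ := (isHomogeneous_X k i).mul (isHomogeneous_X_pow j q)
  exact ⟨q + 1, h₁.sub (add_comm 1 q ▸ h₂)⟩

lemma algebraMap_pow_card_eq_self {Fq k : Type} [Field Fq] [Fintype Fq] [Semiring k]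
    [Algebra Fq k] (hq : Fintype.card Fq = q) (c : Fq) :
    algebraMap Fq k c ^ q = algebraMap Fq k c := by
  rw [← map_pow, ← hq, FiniteField.pow_card]

lemma MvPolynomial.IsHomogeneous.eq_zero_of_projRed_eq_of_eval_eq_zero {Fq k : Type} [Field Fq]
    [Fintype Fq] [CommRing k] [IsDomain k] [Algebra Fq k] (hq : Fintype.card Fq = q)
    {h : MvPolynomial (Fin (m + 1)) k} {d : ℕ} (hh : h.IsHomogeneous d)
    (hred : ∀ μ ∈ h.support, projRed q μ = μ)
    (heval : ∀ a : Fin (m + 1) → Fq, eval (algebraMap Fq k ∘ a) h = 0) : h = 0 := by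
  have hq2 : 2 ≤ q := hq ▸ Fintype.one_lt_card
  have hinj : Set.InjOn (affRed q) (h.support : Set (Fin (m + 1) →₀ ℕ)) :=
    (affRed_injOn q d).mono fun μ hμ =>
      show projRed q μ = μ ∧ μ.degree = d from
        ⟨hred μ hμ, (hh.degree_eq_sum_deg_support hμ).symm⟩
  have hG : mapExponents (affRed q) h = 0 := by
    refine eq_zero_of_degreeOf_lt_card_of_eval_eq_zero (F := Fq) _
      (fun i => (degreeOf_mapExponents_affRed_le hq2 h i).trans_lt (by omega)) fun a => ?_
    rw [eval_mapExponents_affRed hq2 (x := algebraMap Fq k ∘ a)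
      (fun i => algebraMap_pow_card_eq_self hq (a i)), heval a]
  by_contra hne
  obtain ⟨μ, hμ⟩ := support_nonempty.mpr hne
  have := coeff_mapExponents_of_injOn hinj hμ
  rw [hG, coeff_zero] at this
  exact mem_support_iff.mp hμ this.symm

attribute [local instance] MvPolynomial.gradedAlgebra in
lemma eq_zero_of_polyRed_eq_of_mem_fermatIdeal {Fq k : Type} [Field Fq] [Fintype Fq]
    [CommRing k] [IsDomain k] [Algebra Fq k] (hq : Fintype.card Fq = q)
    {h : MvPolynomial (Fin (m + 1)) k} (hred : polyRed q h = h) (hmem : h ∈ fermatIdeal q m k) :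
    h = 0 := by
  have hq2 : 2 ≤ q := hq ▸ Fintype.one_lt_card
  ext μ
  have hcomp : homogeneousComponent μ.degree h = 0 := by
    refine (homogeneousComponent_isHomogeneous _ h).eq_zero_of_projRed_eq_of_eval_eq_zero hq
      (fun ν hν => projRed_eq_self_of_mem_support hq2 hred ?_) fun a => ?_
    · rw [mem_support_iff, coeff_homogeneousComponent] at hν
      exact mem_support_iff.mpr fun h0 => hν (by simp [h0])
    · exact fermatIdeal_le_ker_eval (fun i => algebraMap_pow_card_eq_self hq (a i))
        (homogeneousComponent_mem_of_mem fermatIdeal_isHomogeneous hmem _)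
  simpa [coeff_homogeneousComponent] using congrArg (coeff μ) hcomp

end Uniqueness

theorem coset_unique_reduced_general (q m : ℕ)
    (Fq : Type) [Field Fq] [Fintype Fq] (hq : Fintype.card Fq = q)
    (k : Type) [Field k] [Algebra Fq k]
    (f : MvPolynomial (Fin (m + 1)) k) :
    (polyRed q (polyRed q f) = polyRed q f ∧ f - polyRed q f ∈ fermatIdeal q m k) ∧
    ∀ g : MvPolynomial (Fin (m + 1)) k,
      polyRed q g = g → f - g ∈ fermatIdeal q m k → g = polyRed q f := by
  have hq2 : 2 ≤ q := hq ▸ Fintype.one_lt_card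
  refine ⟨⟨polyRed_polyRed hq2 f, sub_polyRed_mem_fermatIdeal hq2 f⟩, fun g hg hfg => ?_⟩
  have hmem : g - polyRed q f ∈ fermatIdeal q m k := by
    simpa using Ideal.sub_mem _ (sub_polyRed_mem_fermatIdeal hq2 f) hfg
  have hred : polyRed q (g - polyRed q f) = g - polyRed q f := by
    rw [polyRed_sub, hg, polyRed_polyRed hq2]
  exact sub_eq_zero.mp (eq_zero_of_polyRed_eq_of_mem_fermatIdeal hq hred hmem)

/-- Every coset of `Γ_q(k)` contains a unique projectively reduced polynomial, namely the
projective reduction of any of its members. -/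
theorem coset_unique_reduced (q m : ℕ)
    (Fq : Type) [Field Fq] [Fintype Fq] (hq : Fintype.card Fq = q)
    (k : Type) [Field k] [Algebra Fq k] [Algebra.IsAlgebraic Fq k]
    (f : MvPolynomial (Fin (m + 1)) k) :
    (polyRed q (polyRed q f) = polyRed q f ∧ f - polyRed q f ∈ fermatIdeal q m k) ∧
    ∀ g : MvPolynomial (Fin (m + 1)) k,
      polyRed q g = g → f - g ∈ fermatIdeal q m k → g = polyRed q f :=
  coset_unique_reduced_general q m Fq hq k f
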